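/- arXiv:1402.3091 — 2 statements merged into one kernel-verified Lean document; each statement's English description precedes it below -/
import Mathlib

section
/- The infinity series s : ℕ → ℤ is surjective. -/
def s : ℕ → ℤ
  | 0 => 0
  | n + 1 =>
    if (n + 1) % 2 = 0 then -s ((n + 1) / 2)
    else s (n / 2) + 1
decreasing_by all_goals omega

lemma s_odd (n : ℕ) : s (2 * n + 1) = s n + 1 := by
  have h : 2 * n + 1 = (2 * n) + 1 := rfl
  rw [h, s]
  simp [Nat.mul_div_cancel_left, Nat.add_mul_mod_self_left]

lemma s_even (n : ℕ) (hn : 0 < n) : s (2 * n) = - s n := by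
  obtain ⟨m, rfl⟩ : ∃ m, n = m + 1 := ⟨n - 1, by omega⟩
  have h : 2 * (m + 1) = (2 * m + 1) + 1 := by ring
  rw [h, s]
  have : (2 * m + 1 + 1) % 2 = 0 := by omega
  rw [if_pos this]
  have h2 : (2 * m + 1 + 1) / 2 = m + 1 := by omega
  rw [h2]

lemma s_pow (k : ℕ) : s (2 ^ k - 1) = k := by
  induction k with
  | zero => simp [s]
  | succ k ih =>
    have h : 2 ^ (k + 1) - 1 = 2 * (2 ^ k - 1) + 1 := by
      have : 1 ≤ 2 ^ k := Nat.one_le_two_pow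
      omega
    rw [h, s_odd, ih]
    push_cast
    ring

theorem stmt2 : Function.Surjective s := by
  intro m
  rcases le_or_gt 0 m with h | h
  · exact ⟨2 ^ m.toNat - 1, by rw [s_pow, Int.toNat_of_nonneg h]⟩
  · refine ⟨2 * (2 ^ (-m).toNat - 1), ?_⟩
    have hpos : 0 < 2 ^ (-m).toNat - 1 := by
      have : (-m).toNat ≥ 1 := by omega
      have := Nat.one_lt_two_pow_iff.mpr (by omega : (-m).toNat ≠ 0)
      omega
    rw [s_even _ hpos, s_pow]
    omega
end

section
/- For every integer a, the natural density of the set {n : s(n) = a} is 0; i.e., the number of i < 2^N with s(i) = a, divided by 2^N, tends to 0 as N → ∞. -/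
open Finset Filter Topology

lemma s_zero : s 0 = 0 := by simp [s]

lemma s_two_mul (k : ℕ) : s (2 * k) = -s k := by
  cases k with
  | zero => simp [s_zero]
  | succ m =>
    rw [show 2 * (m + 1) = 2 * m + 1 + 1 by ring, s, if_pos (by omega)]
    congr 2
    omega

lemma s_two_mul_add_one (k : ℕ) : s (2 * k + 1) = s k + 1 := by
  rw [s, if_neg (by omega)]
  congr 2
  omega

theorem Finset.sum_range_two_mul {M : Type*} [AddCommMonoid M] (f : ℕ → M) (n : ℕ) :
    ∑ i ∈ range (2 * n), f i = ∑ k ∈ range n, (f (2 * k) + f (2 * k + 1)) := by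
  induction n with
  | zero => simp
  | succ n ih =>
    rw [mul_add, mul_one, sum_range_succ, sum_range_succ, sum_range_succ, ih, add_assoc]

theorem Finset.card_filter_range_two_mul (p : ℕ → Prop) [DecidablePred p] (n : ℕ) :
    #{i ∈ range (2 * n) | p i} =
      #{k ∈ range n | p (2 * k)} + #{k ∈ range n | p (2 * k + 1)} := by
  simp only [card_filter, sum_range_two_mul, sum_add_distrib]

/-- `Nat.choose` extended by `0` to negative lower indices, so that Pascal's rule and the symmetry
`k ↦ n - k` hold for every `k : ℤ`. -/
def chooseInt (n : ℕ) (k : ℤ) : ℕ := if 0 ≤ k then n.choose k.toNat else 0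

lemma chooseInt_succ_succ (n : ℕ) (k : ℤ) :
    chooseInt (n + 1) (k + 1) = chooseInt n k + chooseInt n (k + 1) := by
  unfold chooseInt
  rcases lt_trichotomy k (-1) with hk | rfl | hk
  · simp only [if_neg (show ¬ 0 ≤ k + 1 by omega), if_neg (show ¬ 0 ≤ k by omega)]
  · simp
  · rw [if_pos (by omega), if_pos (by omega), if_pos (by omega),
      show (k + 1).toNat = k.toNat + 1 by omega, Nat.choose_succ_succ]

lemma chooseInt_symm (n : ℕ) (k : ℤ) : chooseInt n (n - k) = chooseInt n k := by
  unfold chooseInt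
  by_cases h0 : 0 ≤ k
  · by_cases hn : k ≤ n
    · rw [if_pos (by omega), if_pos h0, show (n - k).toNat = n - k.toNat by omega,
        Nat.choose_symm (by omega)]
    · rw [if_neg (by omega), if_pos h0, Nat.choose_eq_zero_of_lt (by omega)]
  · rw [if_pos (by omega), if_neg h0, Nat.choose_eq_zero_of_lt (by omega)]

def levelCount (N : ℕ) (a : ℤ) : ℕ := #{i ∈ range (2 ^ N) | s i = a}

lemma levelCount_zero (a : ℤ) : levelCount 0 a = if a = 0 then 1 else 0 := by
  by_cases ha : a = 0 <;> simp [levelCount, filter_singleton, s_zero, eq_comm, ha]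

lemma levelCount_succ (N : ℕ) (a : ℤ) :
    levelCount (N + 1) a = levelCount N (-a) + levelCount N (a - 1) := by
  simp only [levelCount, pow_succ', card_filter_range_two_mul, s_two_mul, s_two_mul_add_one]
  congr 1 <;> congr 1 <;> refine filter_congr fun x _ => ?_ <;> omega

lemma levelCount_succ_eq_chooseInt (N : ℕ) (a : ℤ) :
    levelCount (N + 1) a = chooseInt N ((a + N) / 2) := by
  induction N generalizing a with
  | zero =>
    rw [levelCount_succ, levelCount_zero, levelCount_zero, chooseInt]
    rcases (show a < 0 ∨ a = 0 ∨ a = 1 ∨ 2 ≤ a by omega) with h | rfl | rfl | h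
    · rw [if_neg (by omega), if_neg (by omega), if_neg (by omega)]
    · rfl
    · rfl
    · rw [if_neg (by omega), if_neg (by omega), if_pos (by omega),
        Nat.choose_eq_zero_of_lt (by omega)]
  | succ N ih =>
    have h1 : (a + ↑(N + 1)) / 2 = (a - 1 + N) / 2 + 1 := by push_cast; omega
    have h2 : N - (-a + N) / 2 = (a - 1 + N) / 2 + 1 := by omega
    rw [levelCount_succ, ih, ih, ← chooseInt_symm N ((-a + N) / 2), h1, h2, add_comm,
      chooseInt_succ_succ]

lemma Nat.choose_sq_le_centralBinom (n k : ℕ) : n.choose k ^ 2 ≤ n.centralBinom := by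
  calc n.choose k ^ 2 = n.choose k * n.choose k := sq _
    _ ≤ ∑ ij ∈ antidiagonal (2 * k), n.choose ij.1 * n.choose ij.2 :=
      single_le_sum (f := fun ij : ℕ × ℕ => n.choose ij.1 * n.choose ij.2)
        (fun _ _ => Nat.zero_le _)
        (show (k, k) ∈ antidiagonal (2 * k) from mem_antidiagonal.2 (two_mul k).symm)
    _ = (2 * n).choose (2 * k) := by rw [two_mul n, Nat.add_choose_eq]
    _ ≤ n.centralBinom := Nat.choose_le_centralBinom _ _

lemma chooseInt_sq_le_centralBinom (n : ℕ) (k : ℤ) : chooseInt n k ^ 2 ≤ n.centralBinom := by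
  unfold chooseInt
  split_ifs
  · exact Nat.choose_sq_le_centralBinom _ _
  · simp

lemma levelCount_succ_sq_le (N : ℕ) (a : ℤ) : levelCount (N + 1) a ^ 2 ≤ N.centralBinom := by
  rw [levelCount_succ_eq_chooseInt]
  exact chooseInt_sq_le_centralBinom _ _

lemma Nat.centralBinom_sq_mul_succ_le (n : ℕ) : n.centralBinom ^ 2 * (n + 1) ≤ 16 ^ n := by
  induction n with
  | zero => simp
  | succ n ih =>
    have key : (2 * n + 1) ^ 2 * (n + 2) ≤ 4 * (n + 1) ^ 3 := by nlinarith
    refine Nat.le_of_mul_le_mul_right (c := (n + 1) ^ 2) ?_ (by positivity)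
    calc (n + 1).centralBinom ^ 2 * (n + 1 + 1) * (n + 1) ^ 2
        = ((n + 1) * (n + 1).centralBinom) ^ 2 * (n + 2) := by ring
      _ = 4 * n.centralBinom ^ 2 * ((2 * n + 1) ^ 2 * (n + 2)) := by
        rw [Nat.succ_mul_centralBinom_succ]; ring
      _ ≤ 4 * n.centralBinom ^ 2 * (4 * (n + 1) ^ 3) := by gcongr
      _ = 16 * (n + 1) ^ 2 * (n.centralBinom ^ 2 * (n + 1)) := by ring
      _ ≤ 16 * (n + 1) ^ 2 * 16 ^ n := by gcongr
      _ = 16 ^ (n + 1) * (n + 1) ^ 2 := by ring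

theorem tendsto_zero_of_sq_le {α : Type*} {l : Filter α} {f g : α → ℝ}
    (hf : ∀ x, 0 ≤ f x) (hfg : ∀ x, f x ^ 2 ≤ g x) (hg : Tendsto g l (𝓝 0)) : Tendsto f l (𝓝 0) := by
  refine squeeze_zero hf (fun x => Real.le_sqrt_of_sq_le (hfg x)) ?_
  simpa using hg.sqrt

lemma tendsto_centralBinom_div_four_pow :
    Tendsto (fun n : ℕ => (n.centralBinom : ℝ) / 4 ^ n) atTop (𝓝 0) := by
  refine tendsto_zero_of_sq_le (fun n => by positivity) (fun n => ?_)
    tendsto_one_div_add_atTop_nhds_zero_nat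
  have h : (n.centralBinom : ℝ) ^ 2 * (n + 1) ≤ 16 ^ n := by
    exact_mod_cast Nat.centralBinom_sq_mul_succ_le n
  rw [div_pow, ← pow_mul, mul_comm, pow_mul, div_le_div_iff₀ (by positivity) (by positivity)]
  norm_num
  linarith

lemma levelCount_density_sq_le (N : ℕ) (a : ℤ) :
    ((levelCount (N + 1) a : ℝ) / 2 ^ (N + 1)) ^ 2 ≤ (N.centralBinom : ℝ) / 4 ^ N := by
  have h : (levelCount (N + 1) a : ℝ) ^ 2 ≤ N.centralBinom := by
    exact_mod_cast levelCount_succ_sq_le N a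
  calc ((levelCount (N + 1) a : ℝ) / 2 ^ (N + 1)) ^ 2
      = (levelCount (N + 1) a : ℝ) ^ 2 / 4 ^ (N + 1) := by
        rw [div_pow, ← pow_mul, mul_comm, pow_mul]; norm_num
    _ ≤ (N.centralBinom : ℝ) / 4 ^ N := by gcongr <;> norm_num

theorem stmt7 (a : ℤ) :
    Filter.Tendsto
      (fun N : ℕ => (((Finset.range (2 ^ N)).filter (fun i => s i = a)).card : ℝ) / 2 ^ N)
      Filter.atTop (nhds 0) := by
  rw [← tendsto_add_atTop_iff_nat 1]
  exact tendsto_zero_of_sq_le (fun N => by positivity) (fun N => levelCount_density_sq_le N a)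
    tendsto_centralBinom_div_four_pow
end
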